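/- The induced metric on the cylinder S(u,v) = (a cos v, a sin v, u) from the Cartan-Vranceanu metric ds²_{ℓ,m} is flat with constant coefficients: ds² = du² − (ℓa²/(1+ma²)) du dv + (a²/(1+ma²)² + ℓ²a⁴/(4(1+ma²)²)) dv², hence the cylinder has Gaussian curvature zero. -/

import Mathlib

open Real

/-- Partial derivative in the `i`-th coordinate direction on `ℝ²`. -/
noncomputable def pd2 (i : Fin 2) (f : (Fin 2 → ℝ) → ℝ) (p : Fin 2 → ℝ) : ℝ :=
  fderiv ℝ f p (Pi.single i 1)

/-- `D = 1 + m (x² + y²)`. -/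
noncomputable def Dcv (m : ℝ) (p : Fin 3 → ℝ) : ℝ := 1 + m * (p 0 ^ 2 + p 1 ^ 2)

/-- The Cartan–Vranceanu metric `ds²_{ℓ,m}` as a matrix of coefficients. -/
noncomputable def gCV (l m : ℝ) (p : Fin 3 → ℝ) : Matrix (Fin 3) (Fin 3) ℝ :=
  !![1 / Dcv m p ^ 2 + (l * p 1 / (2 * Dcv m p)) ^ 2,
     -(l ^ 2 * p 0 * p 1) / (4 * Dcv m p ^ 2),
     l * p 1 / (2 * Dcv m p);
     -(l ^ 2 * p 0 * p 1) / (4 * Dcv m p ^ 2),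
     1 / Dcv m p ^ 2 + (l * p 0 / (2 * Dcv m p)) ^ 2,
     -(l * p 0) / (2 * Dcv m p);
     l * p 1 / (2 * Dcv m p),
     -(l * p 0) / (2 * Dcv m p),
     1]

/-- The cylinder `S(u,v) = (a cos v, a sin v, u)` as a map `ℝ² → ℝ³`,
with `p = (u, v)`. -/
noncomputable def Scyl (a : ℝ) (p : Fin 2 → ℝ) : Fin 3 → ℝ :=
  ![a * Real.cos (p 1), a * Real.sin (p 1), p 0]

/-- The metric induced on the cylinder: the pullback of `gCV` along `Scyl`. -/
noncomputable def gCyl (l m a : ℝ) (p : Fin 2 → ℝ) : Matrix (Fin 2) (Fin 2) ℝ :=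
  Matrix.of fun i j =>
    ∑ α : Fin 3, ∑ β : Fin 3,
      gCV l m (Scyl a p) α β * pd2 i (fun q => Scyl a q α) p * pd2 j (fun q => Scyl a q β) p

/-- Christoffel symbols of a 2-dimensional metric `G` given in coordinates. -/
noncomputable def christoffel2 (G : (Fin 2 → ℝ) → Matrix (Fin 2) (Fin 2) ℝ)
    (k i j : Fin 2) (p : Fin 2 → ℝ) : ℝ :=
  (1 / 2) * ∑ r : Fin 2, (G p)⁻¹ k r *
    (pd2 i (fun q => G q r j) p + pd2 j (fun q => G q r i) p
      - pd2 r (fun q => G q i j) p)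

/-- The lowered curvature component `R_{0101} = Σ_k G_{0k} R^k_{101}` of a
2-dimensional metric `G`. -/
noncomputable def riem2 (G : (Fin 2 → ℝ) → Matrix (Fin 2) (Fin 2) ℝ)
    (p : Fin 2 → ℝ) : ℝ :=
  ∑ k : Fin 2, G p 0 k *
    (pd2 0 (fun q => christoffel2 G k 1 1 q) p - pd2 1 (fun q => christoffel2 G k 0 1 q) p
      + ∑ s : Fin 2, (christoffel2 G k 0 s p * christoffel2 G s 1 1 p
          - christoffel2 G k 1 s p * christoffel2 G s 0 1 p))

/-- The Gaussian curvature `K = R_{0101} / det G` of a 2-dimensional metric `G`. -/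
noncomputable def gauss2 (G : (Fin 2 → ℝ) → Matrix (Fin 2) (Fin 2) ℝ)
    (p : Fin 2 → ℝ) : ℝ :=
  riem2 G p / (G p).det

/-! The cylinder lies on `x² + y² = a²`, where the conformal factor `D = 1 + m (x² + y²)` of the
Cartan–Vranceanu metric is the constant `1 + m a²`. The pullback coefficients are then polynomials
in `sin v`, `cos v` and `D⁻¹` that collapse to constants via `sin² v + cos² v = 1`, and a metric with
constant coefficients has vanishing Christoffel symbols, hence zero curvature. -/

lemma pd2_comp_apply {f : ℝ → ℝ} (i j : Fin 2) (p : Fin 2 → ℝ)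
    (hf : DifferentiableAt ℝ f (p j)) :
    pd2 i (fun q => f (q j)) p = deriv f (p j) * (Pi.single i 1 : Fin 2 → ℝ) j := by
  have h : HasFDerivAt (fun q : Fin 2 → ℝ => f (q j))
      (deriv f (p j) • ContinuousLinearMap.proj j) p :=
    hf.hasDerivAt.comp_hasFDerivAt p (hasFDerivAt_apply (𝕜 := ℝ) j p)
  rw [pd2, h.fderiv]
  simp

lemma pd2_const (i : Fin 2) (c : ℝ) (p : Fin 2 → ℝ) : pd2 i (fun _ => c) p = 0 := by
  simp [pd2]

section ConstantMetric

variable (G₀ : Matrix (Fin 2) (Fin 2) ℝ) (p : Fin 2 → ℝ)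

lemma christoffel2_const (k i j : Fin 2) : christoffel2 (fun _ => G₀) k i j p = 0 := by
  simp [christoffel2, pd2_const]

lemma riem2_const : riem2 (fun _ => G₀) p = 0 := by
  simp [riem2, christoffel2_const, pd2_const]

lemma gauss2_const : gauss2 (fun _ => G₀) p = 0 := by
  simp [gauss2, riem2_const]

end ConstantMetric

section Cylinder

variable (a : ℝ) (p : Fin 2 → ℝ)

lemma Dcv_Scyl (m : ℝ) : Dcv m (Scyl a p) = 1 + m * a ^ 2 := by
  simp only [Dcv, Scyl, Matrix.cons_val_zero, Matrix.cons_val_one]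
  linear_combination m * a ^ 2 * sin_sq_add_cos_sq (p 1)

lemma pd2_Scyl (i : Fin 2) (α : Fin 3) :
    pd2 i (fun q => Scyl a q α) p = ![![0, 0, 1], ![-(a * sin (p 1)), a * cos (p 1), 0]] i α := by
  fin_cases α
  · exact (pd2_comp_apply (f := fun v => a * cos v) i 1 p (by fun_prop)).trans
      (by fin_cases i <;> simp)
  · exact (pd2_comp_apply (f := fun v => a * sin v) i 1 p (by fun_prop)).trans
      (by fin_cases i <;> simp)
  · exact (pd2_comp_apply (f := id) i 0 p (by fun_prop)).trans (by fin_cases i <;> simp)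

end Cylinder

lemma gCyl_eq (l m a : ℝ) (p : Fin 2 → ℝ) :
    gCyl l m a p =
      !![1, -(l * a ^ 2) / (2 * (1 + m * a ^ 2));
         -(l * a ^ 2) / (2 * (1 + m * a ^ 2)),
         a ^ 2 / (1 + m * a ^ 2) ^ 2 + l ^ 2 * a ^ 4 / (4 * (1 + m * a ^ 2) ^ 2)] := by
  ext i j
  simp only [gCyl, Matrix.of_apply, Fin.sum_univ_three, gCV, Dcv_Scyl, pd2_Scyl]
  generalize 1 + m * a ^ 2 = D
  have h := sin_sq_add_cos_sq (p 1)
  fin_cases i <;> fin_cases j <;>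
    simp only [Scyl, Fin.isValue, Fin.zero_eta, Fin.mk_one, Nat.succ_eq_add_one, Nat.reduceAdd,
      Matrix.cons_val, Matrix.cons_val', Matrix.cons_val_zero, Matrix.cons_val_one,
      Matrix.cons_val_fin_one]
  · ring
  · linear_combination -(l * a ^ 2) / (2 * D) * h
  · linear_combination -(l * a ^ 2) / (2 * D) * h
  · linear_combination
      (a ^ 2 / D ^ 2 + l ^ 2 * a ^ 4 * (sin (p 1) ^ 2 + cos (p 1) ^ 2 + 1) / (4 * D ^ 2)) * h

theorem stmt19_general (l m a : ℝ) :
    (∀ p : Fin 2 → ℝ,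
      gCyl l m a p =
        !![1, -(l * a ^ 2) / (2 * (1 + m * a ^ 2));
           -(l * a ^ 2) / (2 * (1 + m * a ^ 2)),
           a ^ 2 / (1 + m * a ^ 2) ^ 2 + l ^ 2 * a ^ 4 / (4 * (1 + m * a ^ 2) ^ 2)]) ∧
    (∀ p : Fin 2 → ℝ, gauss2 (gCyl l m a) p = 0) := by
  refine ⟨gCyl_eq l m a, fun p => ?_⟩
  rw [funext (gCyl_eq l m a)]
  exact gauss2_const _ p

/-- The metric induced on the cylinder `S(u,v) = (a cos v, a sin v, u)` from the
Cartan–Vranceanu metric is flat with constant coefficients: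
`ds² = du² − (ℓa²/(1+ma²)) du dv + (a²/(1+ma²)² + ℓ²a⁴/(4(1+ma²)²)) dv²`,
hence the cylinder has Gaussian curvature zero. -/
theorem stmt19 (l m a : ℝ) (ha : 0 < a) (hD : 0 < 1 + m * a ^ 2) :
    (∀ p : Fin 2 → ℝ,
      gCyl l m a p =
        !![1, -(l * a ^ 2) / (2 * (1 + m * a ^ 2));
           -(l * a ^ 2) / (2 * (1 + m * a ^ 2)),
           a ^ 2 / (1 + m * a ^ 2) ^ 2 + l ^ 2 * a ^ 4 / (4 * (1 + m * a ^ 2) ^ 2)]) ∧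
    (∀ p : Fin 2 → ℝ, gauss2 (gCyl l m a) p = 0) :=
  stmt19_general l m a
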